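/- Let φ∈Ψ satisfy limsup_{u→∞} φ(u)/√u = ∞. Then there exists a continuous function F on G² such that limsup_{m→∞} (1/m) Σ_{l=1}^{m} ( exp( φ(|S_{l,l}^κ(F;0,0) − F(0,0)|) ) − 1 ) = +∞, where 0 denotes the null element of G. -/

import Mathlib

open MeasureTheory Filter

noncomputable section

/-- The Walsh group `G`: countable product of `ℤ/2ℤ`. -/
abbrev G : Type := ℕ → ZMod 2

instance : TopologicalSpace (ZMod 2) := ⊥
instance : DiscreteTopology (ZMod 2) := ⟨rfl⟩
instance : MeasurableSpace (ZMod 2) := ⊤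
instance : BorelSpace (ZMod 2) := ⟨borel_eq_top_of_discrete.symm⟩
instance : IsTopologicalAddGroup (ZMod 2) where
  continuous_add := continuous_of_discreteTopology
  continuous_neg := continuous_of_discreteTopology

/-- The normalized Haar (probability) measure on the Walsh group. -/
def μG : Measure G := Measure.addHaarMeasure ⊤

/-- The `k`-th Rademacher function. -/
def rademacher (k : ℕ) (x : G) : ℝ := (-1 : ℝ) ^ (x k).val

/-- The Walsh-Paley functions. -/
def walsh (n : ℕ) (x : G) : ℝ :=
  ∏ k ∈ Finset.range n.size, if n.testBit k then rademacher k x else 1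

/-- The Walsh-Kaczmarz functions. -/
def kaczmarz (n : ℕ) (x : G) : ℝ :=
  if n = 0 then 1 else
    rademacher (Nat.log 2 n) x *
      ∏ k ∈ Finset.range (Nat.log 2 n),
        if n.testBit k then rademacher (Nat.log 2 n - 1 - k) x else 1

/-- Walsh-Paley Dirichlet kernel. -/
def walshDirichlet (n : ℕ) (x : G) : ℝ := ∑ k ∈ Finset.range n, walsh k x

/-- Walsh-Kaczmarz Dirichlet kernel. -/
def kaczDirichlet (n : ℕ) (x : G) : ℝ := ∑ k ∈ Finset.range n, kaczmarz k x

/-- 1D Walsh-Kaczmarz-Fourier coefficient. -/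
def kaczCoeff (f : G → ℝ) (k : ℕ) : ℝ := ∫ x, f x * kaczmarz k x ∂μG

/-- 1D Walsh-Kaczmarz-Fourier partial sum `S_n^κ(f;x)`. -/
def kaczPartialSum (n : ℕ) (f : G → ℝ) (x : G) : ℝ :=
  ∑ k ∈ Finset.range n, kaczCoeff f k * kaczmarz k x

/-- Product measure on `G²`. -/
def μG2 : Measure (G × G) := μG.prod μG

/-- 2D Walsh-Kaczmarz-Fourier coefficient. -/
def kaczCoeff2 (f : G × G → ℝ) (k i : ℕ) : ℝ :=
  ∫ p, f p * kaczmarz k p.1 * kaczmarz i p.2 ∂μG2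

/-- 2D Walsh-Kaczmarz-Fourier partial sum `S_{n,m}^κ(f;x,y)`. -/
def kaczPartialSum2 (n m : ℕ) (f : G × G → ℝ) (p : G × G) : ℝ :=
  ∑ k ∈ Finset.range n, ∑ i ∈ Finset.range m,
    kaczCoeff2 f k i * kaczmarz k p.1 * kaczmarz i p.2

/-- Supremum norm on `G²`. -/
def supNorm (f : G × G → ℝ) : ℝ := ⨆ p : G × G, |f p|

/-- `E_l^{(1)}(f)`: partial best approximation in the first variable. -/
def E1 (f : G × G → ℝ) (l : ℕ) : ℝ :=
  sInf { e : ℝ | ∃ α : ℕ → G → ℝ, (∀ j, Continuous (α j)) ∧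
    e = supNorm (fun p => f p - ∑ j ∈ Finset.range l, α j p.2 * kaczmarz j p.1) }

/-- `E_r^{(2)}(f)`: partial best approximation in the second variable. -/
def E2 (f : G × G → ℝ) (r : ℕ) : ℝ :=
  sInf { e : ℝ | ∃ β : ℕ → G → ℝ, (∀ j, Continuous (β j)) ∧
    e = supNorm (fun p => f p - ∑ j ∈ Finset.range r, β j p.1 * kaczmarz j p.2) }

/-- `E_{l,r}(f)`: best approximation by 2D Walsh-Kaczmarz polynomials. -/
def Ebox (f : G × G → ℝ) (l r : ℕ) : ℝ :=
  sInf { e : ℝ | ∃ c : ℕ → ℕ → ℝ,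
    e = supNorm (fun p => f p -
      ∑ k ∈ Finset.range l, ∑ i ∈ Finset.range r,
        c k i * kaczmarz k p.1 * kaczmarz i p.2) }

/-- The class `Ψ`: increasing on `[0,∞)`, `ψ(0) = lim_{u→0+} ψ(u) = 0`. -/
def PsiClass (ψ : ℝ → ℝ) : Prop :=
  MonotoneOn ψ (Set.Ici 0) ∧ ψ 0 = 0 ∧
    Tendsto ψ (nhdsWithin 0 (Set.Ioi 0)) (nhds 0)

/-- The coordinate-reversing transformation `τ_A`. -/
def tau (A : ℕ) (x : G) : G := fun i => if i < A then x (A - 1 - i) else x i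

end

/-!
The Walsh-Kaczmarz functions are characters of `G`, hence orthonormal. For every `A` there is a
Kaczmarz polynomial `P_A = r_A Q_A` with spectrum in `[2^A, 2^(A+1))`, `|P_A| ≤ 1` and
`P_A(0) = 0`: `Q_(A+1)` equals `Q_A` where `r_A = 1` and a single character where `r_A = -1`.
Its coefficients are arranged so that for odd `A` the partial sum of `P_A` at `0` up to a peak
index `m_A = 2^A + ρ_A` is at least `(A - 1) / 4`.

Then `F(x, y) = ∑ 4^(-j) P_(A_j)(x) P_(A_j)(y)` is continuous, `F(0, 0) = 0`, and at
`m = m_(A_j)` only the `j`-th block contributes, so `S_(m,m) F(0, 0) ≳ 4^(-j) A_j^2`. Since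
`φ(u)/√u` is unbounded, `A_j` can be chosen with `exp φ` of this value above `(j + 1) 2^(A_j+1)`,
so the single term `l = m` already pushes the mean beyond `j`.
-/

open Finset

instance : IsProbabilityMeasure μG := by
  constructor
  rw [μG, ← TopologicalSpace.PositiveCompacts.coe_top (α := G)]
  exact Measure.addHaarMeasure_self

instance : μG.IsAddLeftInvariant := Measure.isAddLeftInvariant_addHaarMeasure ⊤

instance : IsProbabilityMeasure μG2 := by
  rw [μG2]; infer_instance

section Rademacher

lemma rademacher_eq_one_or_neg_one (k : ℕ) (x : G) :
    rademacher k x = 1 ∨ rademacher k x = -1 := by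
  rcases Nat.even_or_odd (x k).val with h | h
  · exact Or.inl h.neg_one_pow
  · exact Or.inr h.neg_one_pow

lemma abs_rademacher (k : ℕ) (x : G) : |rademacher k x| = 1 := by
  rcases rademacher_eq_one_or_neg_one k x with h | h <;> simp [h]

lemma rademacher_zero (k : ℕ) : rademacher k 0 = 1 := by
  simp [rademacher]

lemma rademacher_add (k : ℕ) (x y : G) :
    rademacher k (x + y) = rademacher k x * rademacher k y := by
  simp only [rademacher, Pi.add_apply]
  rw [← pow_add, ZMod.val_add, ← neg_one_pow_eq_pow_mod_two]

lemma continuous_rademacher (k : ℕ) : Continuous (rademacher k) :=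
  (continuous_of_discreteTopology (f := fun v : ZMod 2 => (-1 : ℝ) ^ v.val)).comp
    (continuous_apply k)

lemma rademacher_single (j k : ℕ) :
    rademacher k (Pi.single j 1) = if k = j then -1 else 1 := by
  by_cases h : k = j
  · subst h; simp [rademacher, show (1 : ZMod 2).val = 1 from rfl]
  · simp [rademacher, h]

end Rademacher

section WalshChar

def walshChar (s : Finset ℕ) (x : G) : ℝ := ∏ i ∈ s, rademacher i x

lemma abs_walshChar (s : Finset ℕ) (x : G) : |walshChar s x| = 1 := by
  simp [walshChar, abs_prod, abs_rademacher]

lemma walshChar_zero (s : Finset ℕ) : walshChar s 0 = 1 := by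
  simp [walshChar, rademacher_zero]

lemma walshChar_add (s : Finset ℕ) (x y : G) :
    walshChar s (x + y) = walshChar s x * walshChar s y := by
  simp only [walshChar, rademacher_add, prod_mul_distrib]

lemma walshChar_single (s : Finset ℕ) (j : ℕ) :
    walshChar s (Pi.single j 1) = if j ∈ s then -1 else 1 := by
  simp only [walshChar, rademacher_single, prod_ite_eq']

lemma continuous_walshChar (s : Finset ℕ) : Continuous (walshChar s) :=
  continuous_finsetProd _ fun i _ => continuous_rademacher i

lemma walshChar_mul_self (s : Finset ℕ) (x : G) : walshChar s x * walshChar s x = 1 := by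
  rcases abs_eq (zero_le_one' ℝ) |>.1 (abs_walshChar s x) with h | h <;> simp [h]

/-- Translating by the unit vector of a coordinate in exactly one of `s`, `t` flips the sign of
the integrand. -/
lemma integral_walshChar_mul {s t : Finset ℕ} (hst : s ≠ t) :
    ∫ x, walshChar s x * walshChar t x ∂μG = 0 := by
  obtain ⟨j, hj⟩ := symmDiff_nonempty.2 hst
  have hflip : walshChar s (Pi.single j 1) * walshChar t (Pi.single j 1) = -1 := by
    rw [mem_symmDiff] at hj
    rcases hj with ⟨hs, ht⟩ | ⟨ht, hs⟩ <;> simp [walshChar_single, hs, ht]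
  have h := integral_add_left_eq_self (μ := μG)
    (fun x => walshChar s x * walshChar t x) (Pi.single j 1)
  simp only [walshChar_add] at h
  have hneg : ∀ x, walshChar s (Pi.single j 1) * walshChar s x * (walshChar t (Pi.single j 1) *
      walshChar t x) = -(walshChar s x * walshChar t x) := fun x => by
    linear_combination (walshChar s x * walshChar t x) * hflip
  simp only [hneg, integral_neg] at h
  linarith

end WalshChar

section KaczmarzOrthonormal

lemma Nat.testBit_log_two_self {n : ℕ} (hn : n ≠ 0) : n.testBit (Nat.log 2 n) = true := by
  set L := Nat.log 2 n
  have h1 : 2 ^ L ≤ n := Nat.pow_log_le_self 2 hn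
  have h2 : n < 2 ^ (L + 1) := Nat.lt_pow_succ_log_self (by norm_num) n
  rw [show n = 2 ^ L + (n - 2 ^ L) by omega, Nat.testBit_two_pow_add_eq,
    Nat.testBit_lt_two_pow (by rw [pow_succ] at h2; omega)]
  rfl

lemma Nat.testBit_of_log_two_lt {n k : ℕ} (hk : Nat.log 2 n < k) : n.testBit k = false :=
  Nat.testBit_lt_two_pow <| (Nat.lt_pow_succ_log_self (by norm_num) n).trans_le <|
    Nat.pow_le_pow_right (by norm_num) hk

def kaczSupport (n : ℕ) : Finset ℕ :=
  if n = 0 then ∅ else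
    insert (Nat.log 2 n)
      (((range (Nat.log 2 n)).filter (fun k => n.testBit k)).image (Nat.log 2 n - 1 - ·))

lemma kaczmarz_eq_walshChar (n : ℕ) : kaczmarz n = walshChar (kaczSupport n) := by
  funext x
  by_cases hn : n = 0
  · simp [hn, kaczmarz, kaczSupport, walshChar]
  rw [kaczmarz, kaczSupport, if_neg hn, if_neg hn, walshChar, prod_insert (by simp; omega),
    prod_image fun a ha b hb hab => by simp at ha hb hab; omega, prod_filter]

lemma mem_kaczSupport {n i : ℕ} (hn : n ≠ 0) :
    i ∈ kaczSupport n ↔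
      i = Nat.log 2 n ∨ ∃ k < Nat.log 2 n, n.testBit k ∧ i = Nat.log 2 n - 1 - k := by
  simp [kaczSupport, hn, eq_comm (a := i), and_assoc]

lemma le_log_of_mem_kaczSupport {n i : ℕ} (hn : n ≠ 0) (h : i ∈ kaczSupport n) :
    i ≤ Nat.log 2 n := by
  rcases (mem_kaczSupport hn).1 h with rfl | ⟨k, hk, -, rfl⟩ <;> omega

lemma log_mem_kaczSupport {n : ℕ} (hn : n ≠ 0) : Nat.log 2 n ∈ kaczSupport n :=
  (mem_kaczSupport hn).2 (Or.inl rfl)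

lemma testBit_iff_mem_kaczSupport {n k : ℕ} (hn : n ≠ 0) (hk : k < Nat.log 2 n) :
    n.testBit k = true ↔ Nat.log 2 n - 1 - k ∈ kaczSupport n := by
  rw [mem_kaczSupport hn]
  refine ⟨fun hb => Or.inr ⟨k, hk, hb, rfl⟩, ?_⟩
  rintro (h | ⟨k', hk', hb, h⟩)
  · omega
  · rwa [show k = k' by omega]

lemma kaczSupport_injective : Function.Injective kaczSupport := by
  have hne : ∀ {n}, n ≠ 0 → kaczSupport n ≠ ∅ := fun hn h => by
    simpa [h] using log_mem_kaczSupport hn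
  intro n m h
  rcases eq_or_ne n 0 with rfl | hn
  · by_contra hm; exact hne (Ne.symm hm) (by simpa [kaczSupport] using h.symm)
  rcases eq_or_ne m 0 with rfl | hm
  · exact absurd (by simpa [kaczSupport] using h) (hne hn)
  have hlog : Nat.log 2 n = Nat.log 2 m := le_antisymm
    (le_log_of_mem_kaczSupport hm (h ▸ log_mem_kaczSupport hn))
    (le_log_of_mem_kaczSupport hn (h ▸ log_mem_kaczSupport hm))
  refine Nat.eq_of_testBit_eq fun k => ?_
  rcases lt_trichotomy k (Nat.log 2 n) with hk | hk | hk
  · rw [Bool.eq_iff_iff, testBit_iff_mem_kaczSupport hn hk,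
      testBit_iff_mem_kaczSupport hm (hlog ▸ hk), h, hlog]
  · rw [hk, Nat.testBit_log_two_self hn, hlog, Nat.testBit_log_two_self hm]
  · rw [Nat.testBit_of_log_two_lt hk, Nat.testBit_of_log_two_lt (hlog ▸ hk)]

lemma abs_kaczmarz (n : ℕ) (x : G) : |kaczmarz n x| = 1 := by
  rw [kaczmarz_eq_walshChar, abs_walshChar]

lemma kaczmarz_zero (n : ℕ) : kaczmarz n 0 = 1 := by
  rw [kaczmarz_eq_walshChar, walshChar_zero]

@[fun_prop]
lemma continuous_kaczmarz (n : ℕ) : Continuous (kaczmarz n) := by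
  rw [kaczmarz_eq_walshChar]; exact continuous_walshChar _

lemma integral_kaczmarz_mul (n m : ℕ) :
    ∫ x, kaczmarz n x * kaczmarz m x ∂μG = if n = m then 1 else 0 := by
  split_ifs with h
  · simp [h, kaczmarz_eq_walshChar, walshChar_mul_self]
  · simp only [kaczmarz_eq_walshChar]
    exact integral_walshChar_mul (kaczSupport_injective.ne h)

end KaczmarzOrthonormal

section KaczPoly

def kaczPoly (a : ℕ → ℝ) (N : ℕ) (x : G) : ℝ := ∑ k ∈ range N, a k * kaczmarz k x

lemma continuous_kaczPoly (a : ℕ → ℝ) (N : ℕ) : Continuous (kaczPoly a N) :=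
  continuous_finsetSum _ fun k _ => continuous_const.mul (continuous_kaczmarz k)

lemma kaczPoly_zero (a : ℕ → ℝ) (N : ℕ) : kaczPoly a N 0 = ∑ k ∈ range N, a k := by
  simp [kaczPoly, kaczmarz_zero]

lemma kaczCoeff_kaczPoly (a : ℕ → ℝ) (N k : ℕ) :
    kaczCoeff (kaczPoly a N) k = if k < N then a k else 0 := by
  have hint : ∀ j, Integrable (fun x => kaczmarz j x * kaczmarz k x) μG := fun j =>
    ((continuous_kaczmarz j).mul (continuous_kaczmarz k)).integrable_of_hasCompactSupport
      (HasCompactSupport.of_compactSpace _)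
  simp only [kaczCoeff, kaczPoly, sum_mul, mul_assoc]
  rw [integral_finsetSum _ fun j _ => (hint j).const_mul (a j)]
  simp [integral_const_mul, integral_kaczmarz_mul]

lemma kaczPartialSum_kaczPoly (n : ℕ) (a : ℕ → ℝ) (N : ℕ) :
    kaczPartialSum n (kaczPoly a N) = kaczPoly a (min n N) := by
  funext x
  simp only [kaczPartialSum, kaczCoeff_kaczPoly, kaczPoly, ite_mul, zero_mul, ← sum_filter]
  congr 1
  ext k
  simp

lemma abs_kaczCoeff_le {f : G → ℝ} (hf : ∀ x, |f x| ≤ 1) (k : ℕ) : |kaczCoeff f k| ≤ 1 := by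
  have h := norm_integral_le_of_norm_le_const (μ := μG) (C := 1)
    (f := fun x => f x * kaczmarz k x)
    (Filter.Eventually.of_forall fun x => by simpa [abs_mul, abs_kaczmarz] using hf x)
  simpa [kaczCoeff] using h

end KaczPoly

section TensorSeries

noncomputable def tensorSeries (c : ℕ → ℝ) (g : ℕ → G → ℝ) (p : G × G) : ℝ :=
  ∑' j, c j * (g j p.1 * g j p.2)

variable {c : ℕ → ℝ} {g : ℕ → G → ℝ}

lemma abs_mul_mul_le_of_abs_le_one {a u v : ℝ} (hu : |u| ≤ 1) (hv : |v| ≤ 1) :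
    |a * (u * v)| ≤ |a| := by
  rw [abs_mul, abs_mul]
  exact mul_le_of_le_one_right (abs_nonneg a) (mul_le_one₀ hu (abs_nonneg v) hv)

lemma continuous_tensorSeries (hc : Summable c) (hg : ∀ j, Continuous (g j))
    (hg1 : ∀ j x, |g j x| ≤ 1) : Continuous (tensorSeries c g) :=
  continuous_tsum (fun j => continuous_const.mul
      (((hg j).comp continuous_fst).mul ((hg j).comp continuous_snd)))
    hc.abs fun j p => abs_mul_mul_le_of_abs_le_one (hg1 j p.1) (hg1 j p.2)

lemma kaczCoeff2_tensorSeries (hc : Summable c) (hg : ∀ j, Continuous (g j))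
    (hg1 : ∀ j x, |g j x| ≤ 1) (k i : ℕ) :
    kaczCoeff2 (tensorSeries c g) k i =
      ∑' j, c j * (kaczCoeff (g j) k * kaczCoeff (g j) i) := by
  set term : ℕ → G × G → ℝ := fun j p =>
    c j * (g j p.1 * kaczmarz k p.1) * (g j p.2 * kaczmarz i p.2)
  have hcont : ∀ j, Continuous (term j) := fun j => by
    have := hg j
    simp only [term]
    fun_prop
  have hbound : ∀ j p, ‖term j p‖ ≤ |c j| := fun j p => by
    have h1 : |g j p.1 * kaczmarz k p.1| ≤ 1 := by
      rw [abs_mul, abs_kaczmarz, mul_one]; exact hg1 j _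
    have h2 : |g j p.2 * kaczmarz i p.2| ≤ 1 := by
      rw [abs_mul, abs_kaczmarz, mul_one]; exact hg1 j _
    simpa [term, mul_assoc] using abs_mul_mul_le_of_abs_le_one (a := c j) h1 h2
  have hint : ∀ j, Integrable (term j) μG2 := fun j =>
    (hcont j).integrable_of_hasCompactSupport (HasCompactSupport.of_compactSpace _)
  have hsum : Summable fun j => ∫ p, ‖term j p‖ ∂μG2 := by
    refine hc.abs.of_nonneg_of_le (fun j => integral_nonneg fun _ => norm_nonneg _) fun j => ?_
    exact (integral_mono (hint j).norm (integrable_const _) (hbound j)).trans (by simp)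
  have hF : ∀ p, tensorSeries c g p * kaczmarz k p.1 * kaczmarz i p.2 = ∑' j, term j p := by
    intro p
    rw [tensorSeries, ← tsum_mul_right, ← tsum_mul_right]
    exact tsum_congr fun j => by ring
  simp only [kaczCoeff2, hF, ← integral_tsum_of_summable_integral_norm hint hsum]
  refine tsum_congr fun j => ?_
  simp only [term]
  rw [μG2, integral_prod_mul (fun x => c j * (g j x * kaczmarz k x))
    (fun y => g j y * kaczmarz i y), integral_const_mul, kaczCoeff, kaczCoeff, mul_assoc]

lemma kaczPartialSum2_tensorSeries (hc : Summable c) (hg : ∀ j, Continuous (g j))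
    (hg1 : ∀ j x, |g j x| ≤ 1) (n m : ℕ) (x y : G) :
    kaczPartialSum2 n m (tensorSeries c g) (x, y) =
      ∑' j, c j * (kaczPartialSum n (g j) x * kaczPartialSum m (g j) y) := by
  have hsum : ∀ k i, Summable fun j =>
      c j * (kaczCoeff (g j) k * kaczCoeff (g j) i) * kaczmarz k x * kaczmarz i y := by
    intro k i
    refine hc.abs.of_norm_bounded fun j => ?_
    simpa [abs_mul, abs_kaczmarz] using abs_mul_mul_le_of_abs_le_one (a := c j)
      (abs_kaczCoeff_le (hg1 j) k) (abs_kaczCoeff_le (hg1 j) i)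
  simp only [kaczPartialSum2, kaczCoeff2_tensorSeries hc hg hg1, ← tsum_mul_right]
  simp only [← Summable.tsum_finsetSum fun i _ => hsum _ i]
  rw [← Summable.tsum_finsetSum fun k _ => summable_sum fun i _ => hsum k i]
  refine tsum_congr fun j => ?_
  rw [kaczPartialSum, kaczPartialSum, sum_mul_sum, mul_sum]
  refine sum_congr rfl fun k _ => ?_
  rw [mul_sum]
  exact sum_congr rfl fun i _ => by ring

end TensorSeries

section SwitchPolynomial

lemma sum_range_two_mul {M : Type*} [AddCommMonoid M] (f : ℕ → M) (n : ℕ) :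
    ∑ t ∈ range (2 * n), f t = ∑ t ∈ range n, (f (2 * t) + f (2 * t + 1)) := by
  induction n with
  | zero => simp
  | succ n ih =>
    rw [show 2 * (n + 1) = 2 * n + 1 + 1 by ring, sum_range_succ, sum_range_succ, ih,
      sum_range_succ, add_assoc]

def peakIndex : ℕ → ℕ
  | 0 => 0
  | A + 1 => 2 * peakIndex A + A % 2

/-- The coefficients `e_A(t)`, `t < 2 ^ A`, are built so that `switchCore (A + 1)` equals
`switchCore A` where `r_A = 1` and the single character `revWalsh A (peakIndex A)` where
`r_A = -1`. -/
noncomputable def switchCoeff : ℕ → ℕ → ℝ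
  | 0, _ => 0
  | A + 1, t => (switchCoeff A (t / 2) + if t / 2 = peakIndex A then (-1) ^ t else 0) / 2

lemma peakIndex_lt (A : ℕ) : peakIndex A < 2 ^ A := by
  induction A with
  | zero => simp [peakIndex]
  | succ A ih => rw [peakIndex, pow_succ]; omega

lemma switchCoeff_two_mul (A t : ℕ) :
    switchCoeff (A + 1) (2 * t) = (switchCoeff A t + if t = peakIndex A then 1 else 0) / 2 := by
  simp [switchCoeff, pow_mul]

lemma switchCoeff_two_mul_add_one (A t : ℕ) :
    switchCoeff (A + 1) (2 * t + 1) =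
      (switchCoeff A t - if t = peakIndex A then 1 else 0) / 2 := by
  rw [switchCoeff, show (2 * t + 1) / 2 = t by omega, pow_succ, pow_mul]
  split_ifs <;> ring

lemma sum_switchCoeff_two_mul (A s : ℕ) :
    ∑ t ∈ range (2 * s), switchCoeff (A + 1) t = ∑ t ∈ range s, switchCoeff A t := by
  rw [sum_range_two_mul]
  exact sum_congr rfl fun t _ => by
    rw [switchCoeff_two_mul, switchCoeff_two_mul_add_one]; ring

lemma sum_switchCoeff_eq_zero (A : ℕ) : ∑ t ∈ range (2 ^ A), switchCoeff A t = 0 := by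
  induction A with
  | zero => simp [switchCoeff]
  | succ A ih => rw [pow_succ, mul_comm, sum_switchCoeff_two_mul, ih]

/-- From `A` to `A + 2` the partial sum up to the peak grows by `(e + 1) / 2`, where `e` is the
peak coefficient, and `e` is replaced by `(e + 1) / 4`. -/
lemma switchCoeff_peak_nonneg_and_le_sum (B : ℕ) :
    0 ≤ switchCoeff (2 * B + 1) (peakIndex (2 * B + 1)) ∧
      (B : ℝ) / 2 ≤ ∑ t ∈ range (peakIndex (2 * B + 1)), switchCoeff (2 * B + 1) t := by
  induction B with
  | zero => norm_num [switchCoeff, peakIndex]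
  | succ B ih =>
    rw [show 2 * (B + 1) + 1 = 2 * B + 1 + 1 + 1 by ring]
    generalize hA : 2 * B + 1 = A at ih ⊢
    have hpeak : peakIndex (A + 1) = 2 * peakIndex A + 1 := by rw [peakIndex]; omega
    have hpeak' : peakIndex (A + 1 + 1) = 2 * (2 * peakIndex A + 1) := by
      rw [peakIndex, hpeak]; omega
    rw [hpeak', switchCoeff_two_mul, if_pos hpeak.symm, switchCoeff_two_mul_add_one, if_pos rfl,
      sum_switchCoeff_two_mul, sum_range_succ, sum_switchCoeff_two_mul, switchCoeff_two_mul,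
      if_pos rfl]
    push_cast
    constructor <;> linarith [ih.1, ih.2]

end SwitchPolynomial

section BlockPolynomial

def revWalsh (A t : ℕ) (x : G) : ℝ :=
  ∏ k ∈ range A, if t.testBit k then rademacher (A - 1 - k) x else 1

lemma abs_revWalsh (A t : ℕ) (x : G) : |revWalsh A t x| = 1 := by
  rw [revWalsh, abs_prod]
  exact prod_eq_one fun k _ => by split_ifs <;> simp [abs_rademacher]

lemma revWalsh_succ (A t : ℕ) (x : G) :
    revWalsh (A + 1) t x = revWalsh A (t / 2) x * if t % 2 = 1 then rademacher A x else 1 := by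
  simp [revWalsh, prod_range_succ', Nat.testBit_add_one, Nat.testBit_zero, Nat.sub_sub, add_comm]

lemma revWalsh_two_mul (A t : ℕ) (x : G) : revWalsh (A + 1) (2 * t) x = revWalsh A t x := by
  simp [revWalsh_succ]

lemma revWalsh_two_mul_add_one (A t : ℕ) (x : G) :
    revWalsh (A + 1) (2 * t + 1) x = revWalsh A t x * rademacher A x := by
  simp [revWalsh_succ, show (2 * t + 1) / 2 = t by omega]

lemma kaczmarz_two_pow_add {A t : ℕ} (ht : t < 2 ^ A) (x : G) :
    kaczmarz (2 ^ A + t) x = rademacher A x * revWalsh A t x := by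
  have hlog : Nat.log 2 (2 ^ A + t) = A :=
    Nat.log_eq_of_pow_le_of_lt_pow (Nat.le_add_right _ _) (by rw [pow_succ]; omega)
  rw [kaczmarz, if_neg (by positivity), hlog, revWalsh]
  exact congrArg _ (prod_congr rfl fun k hk => by
    rw [Nat.testBit_two_pow_add_gt (mem_range.1 hk)])

noncomputable def switchCore (A : ℕ) (x : G) : ℝ :=
  ∑ t ∈ range (2 ^ A), switchCoeff A t * revWalsh A t x

lemma switchCore_succ (A : ℕ) (x : G) :
    switchCore (A + 1) x = switchCore A x * ((1 + rademacher A x) / 2) +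
      revWalsh A (peakIndex A) x * ((1 - rademacher A x) / 2) := by
  have hpeak : ∑ t ∈ range (2 ^ A), (if t = peakIndex A then 1 else 0) * revWalsh A t x =
      revWalsh A (peakIndex A) x := by
    simp [ite_mul, peakIndex_lt]
  rw [← hpeak, switchCore, switchCore, pow_succ, mul_comm, sum_range_two_mul, sum_mul, sum_mul,
    ← sum_add_distrib]
  refine sum_congr rfl fun t _ => ?_
  rw [switchCoeff_two_mul, switchCoeff_two_mul_add_one, revWalsh_two_mul,
    revWalsh_two_mul_add_one]
  ring

lemma abs_switchCore_le (A : ℕ) (x : G) : |switchCore A x| ≤ 1 := by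
  induction A with
  | zero => simp [switchCore, switchCoeff]
  | succ A ih =>
    rcases rademacher_eq_one_or_neg_one A x with h | h <;>
      norm_num [switchCore_succ, h, ih, abs_revWalsh]

noncomputable def blockCoeff (A k : ℕ) : ℝ := if 2 ^ A ≤ k then switchCoeff A (k - 2 ^ A) else 0

noncomputable def blockPoly (A : ℕ) : G → ℝ := kaczPoly (blockCoeff A) (2 ^ (A + 1))

lemma sum_blockCoeff_of_le {A n : ℕ} (h : n ≤ 2 ^ A) : ∑ k ∈ range n, blockCoeff A k = 0 :=
  sum_eq_zero fun k hk => if_neg (by simp at hk; omega)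

lemma sum_blockCoeff_two_pow_add {A s : ℕ} :
    ∑ k ∈ range (2 ^ A + s), blockCoeff A k = ∑ t ∈ range s, switchCoeff A t := by
  rw [sum_range_add, sum_blockCoeff_of_le le_rfl, zero_add]
  simp [blockCoeff]

lemma blockPoly_eq (A : ℕ) (x : G) : blockPoly A x = rademacher A x * switchCore A x := by
  rw [blockPoly, kaczPoly, pow_succ, mul_two, sum_range_add, switchCore, mul_sum,
    sum_eq_zero fun k hk => by simp only [mem_range] at hk; simp [blockCoeff, hk], zero_add]
  refine sum_congr rfl fun t ht => ?_
  rw [kaczmarz_two_pow_add (mem_range.1 ht), blockCoeff, if_pos (Nat.le_add_right _ _),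
    Nat.add_sub_cancel_left]
  ring

lemma abs_blockPoly_le (A : ℕ) (x : G) : |blockPoly A x| ≤ 1 := by
  rw [blockPoly_eq, abs_mul, abs_rademacher, one_mul]
  exact abs_switchCore_le A x

lemma blockPoly_zero (A : ℕ) : blockPoly A 0 = 0 := by
  rw [blockPoly, kaczPoly_zero, pow_succ, mul_two, sum_blockCoeff_two_pow_add,
    sum_switchCoeff_eq_zero]

lemma continuous_blockPoly (A : ℕ) : Continuous (blockPoly A) := continuous_kaczPoly _ _

lemma kaczPartialSum_blockPoly_zero (n A : ℕ) :
    kaczPartialSum n (blockPoly A) 0 = ∑ k ∈ range (min n (2 ^ (A + 1))), blockCoeff A k := by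
  rw [blockPoly, kaczPartialSum_kaczPoly, kaczPoly_zero]

lemma kaczPartialSum_blockPoly_zero_of_le {n A : ℕ} (h : n ≤ 2 ^ A) :
    kaczPartialSum n (blockPoly A) 0 = 0 := by
  rw [kaczPartialSum_blockPoly_zero, sum_blockCoeff_of_le (min_le_left _ _ |>.trans h)]

lemma kaczPartialSum_blockPoly_zero_of_ge {n A : ℕ} (h : 2 ^ (A + 1) ≤ n) :
    kaczPartialSum n (blockPoly A) 0 = 0 := by
  rw [kaczPartialSum_blockPoly_zero, min_eq_right h, ← kaczPoly_zero, ← blockPoly, blockPoly_zero]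

lemma kaczPartialSum_blockPoly_zero_peak (A : ℕ) :
    kaczPartialSum (2 ^ A + peakIndex A) (blockPoly A) 0 =
      ∑ t ∈ range (peakIndex A), switchCoeff A t := by
  have := peakIndex_lt A
  rw [kaczPartialSum_blockPoly_zero, min_eq_left (by rw [pow_succ]; omega),
    sum_blockCoeff_two_pow_add]

end BlockPolynomial

section BlockSeries

noncomputable def blockSeries (A : ℕ → ℕ) : G × G → ℝ :=
  tensorSeries (fun j => (4 : ℝ)⁻¹ ^ j) (fun j => blockPoly (A j))

lemma summable_inv_four_pow : Summable fun j : ℕ => (4 : ℝ)⁻¹ ^ j :=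
  summable_geometric_of_lt_one (by norm_num) (by norm_num)

lemma continuous_blockSeries (A : ℕ → ℕ) : Continuous (blockSeries A) :=
  continuous_tensorSeries summable_inv_four_pow (fun _ => continuous_blockPoly _)
    fun _ => abs_blockPoly_le _

lemma blockSeries_zero (A : ℕ → ℕ) : blockSeries A (0, 0) = 0 := by
  simp [blockSeries, tensorSeries, blockPoly_zero]

/-- At the peak of the `j`-th block, every other block has either been summed completely (and
vanishes at `0`) or not been reached yet. -/
lemma kaczPartialSum2_blockSeries_peak {A : ℕ → ℕ} (hA : StrictMono A) (j : ℕ) :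
    kaczPartialSum2 (2 ^ A j + peakIndex (A j)) (2 ^ A j + peakIndex (A j)) (blockSeries A)
        (0, 0) = (4 : ℝ)⁻¹ ^ j * (∑ t ∈ range (peakIndex (A j)), switchCoeff (A j) t) ^ 2 := by
  rw [blockSeries, kaczPartialSum2_tensorSeries summable_inv_four_pow
      (fun _ => continuous_blockPoly _) (fun _ => abs_blockPoly_le _),
    tsum_eq_single j, kaczPartialSum_blockPoly_zero_peak, sq]
  intro i hij
  have hpeak := peakIndex_lt (A j)
  rcases hij.lt_or_gt with h | h
  · have : 2 ^ (A i + 1) ≤ 2 ^ A j := Nat.pow_le_pow_right (by norm_num) (hA h)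
    rw [kaczPartialSum_blockPoly_zero_of_ge (by omega), zero_mul, mul_zero]
  · have : 2 ^ (A j + 1) ≤ 2 ^ A i := Nat.pow_le_pow_right (by norm_num) (hA h)
    rw [kaczPartialSum_blockPoly_zero_of_le (by rw [pow_succ] at this; omega), zero_mul,
      mul_zero]

end BlockSeries

lemma frequently_add_mul_le_comp_sq {φ : ℝ → ℝ} (hmono : MonotoneOn φ (Set.Ici 0))
    (hlim : ∀ C : ℝ, ∃ᶠ u in atTop, C < φ u / Real.sqrt u) (a b : ℝ) {c : ℝ} (hc : 0 < c) :
    ∃ᶠ B : ℕ in atTop, a + b * B ≤ φ ((c * B) ^ 2) := by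
  rw [frequently_atTop]
  intro N
  obtain ⟨u, hu, hφu⟩ := frequently_atTop.1 (hlim (|a| + |b| + |b| / c)) (max 1 ((c * N) ^ 2))
  have hs1 : 1 ≤ Real.sqrt u := Real.one_le_sqrt.2 (le_of_max_le_left hu)
  have hsN : c * N ≤ Real.sqrt u := Real.le_sqrt_of_sq_le (le_of_max_le_right hu)
  set B := ⌈Real.sqrt u / c⌉₊
  have hB : Real.sqrt u / c ≤ B := Nat.le_ceil _
  have hB' : (B : ℝ) < Real.sqrt u / c + 1 := Nat.ceil_lt_add_one (by positivity)
  refine ⟨B, ?_, ?_⟩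
  · have : (N : ℝ) ≤ B := le_trans (by rwa [le_div_iff₀ hc, mul_comm]) hB
    exact_mod_cast this
  have hu_le : u ≤ (c * B) ^ 2 := by
    rw [← Real.sq_sqrt (le_trans zero_le_one (le_of_max_le_left hu))]
    exact pow_le_pow_left₀ (by positivity) (by rwa [div_le_iff₀ hc, mul_comm] at hB) 2
  have h1 : b * B ≤ |b| * (Real.sqrt u / c + 1) :=
    (le_abs_self _).trans (by rw [abs_mul, Nat.abs_cast]; gcongr)
  have h2 : |a| + |b| ≤ (|a| + |b|) * Real.sqrt u := le_mul_of_one_le_right (by positivity) hs1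
  have h3 : |b| * (Real.sqrt u / c) = |b| / c * Real.sqrt u := by ring
  calc a + b * B ≤ (|a| + |b| + |b| / c) * Real.sqrt u := by nlinarith [le_abs_self a]
    _ ≤ φ u := ((lt_div_iff₀ (by positivity)).1 hφu).le
    _ ≤ φ ((c * B) ^ 2) :=
      hmono (le_trans zero_le_one (le_of_max_le_left hu)) (Set.mem_Ici.2 (sq_nonneg _)) hu_le

lemma le_mean_sub_one_of_le {g : ℕ → ℝ} (hg : ∀ l, 1 ≤ g l) {m : ℕ} (hm : 1 ≤ m) {c : ℝ}
    (h : (c + 1) * m ≤ g m) : c ≤ (1 / (m : ℝ)) * ∑ l ∈ Icc 1 m, (g l - 1) := by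
  have hm' : (1 : ℝ) ≤ m := by exact_mod_cast hm
  have hsingle : g m - 1 ≤ ∑ l ∈ Icc 1 m, (g l - 1) :=
    single_le_sum (fun l _ => sub_nonneg.2 (hg l)) (mem_Icc.2 ⟨hm, le_rfl⟩)
  rw [one_div_mul_eq_div, le_div_iff₀ (by positivity)]
  nlinarith

lemma le_exp_phi_blockSeries_peak {φ : ℝ → ℝ} (hmono : MonotoneOn φ (Set.Ici 0))
    {A : ℕ → ℕ} (hA : StrictMono A) {j b : ℕ} (hAj : A j = 2 * b + 1)
    (hφ : Real.log (4 * (j + 1)) + Real.log 4 * b ≤ φ (((2 ^ (j + 1))⁻¹ * b) ^ 2)) :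
    ((j : ℝ) + 1) * (2 ^ A j + peakIndex (A j) : ℕ) ≤
      Real.exp (φ |kaczPartialSum2 (2 ^ A j + peakIndex (A j)) (2 ^ A j + peakIndex (A j))
        (blockSeries A) (0, 0) - blockSeries A (0, 0)|) := by
  set Y := ∑ t ∈ range (peakIndex (A j)), switchCoeff (A j) t
  have hY : (b : ℝ) / 2 ≤ Y := by
    simpa only [Y, hAj] using (switchCoeff_peak_nonneg_and_le_sum b).2
  have hval : |kaczPartialSum2 (2 ^ A j + peakIndex (A j)) (2 ^ A j + peakIndex (A j))
      (blockSeries A) (0, 0) - blockSeries A (0, 0)| = (4 : ℝ)⁻¹ ^ j * Y ^ 2 := by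
    rw [kaczPartialSum2_blockSeries_peak hA, blockSeries_zero, sub_zero,
      abs_of_nonneg (by positivity)]
  have hsq : ((2 ^ (j + 1))⁻¹ * (b : ℝ)) ^ 2 ≤ (4 : ℝ)⁻¹ ^ j * Y ^ 2 := by
    have : ((2 ^ (j + 1))⁻¹ * (b : ℝ)) ^ 2 = (4 : ℝ)⁻¹ ^ j * ((b : ℝ) / 2) ^ 2 := by
      rw [show (4 : ℝ) = 2 ^ 2 by norm_num, inv_pow, ← pow_mul]
      field_simp
      ring
    rw [this]
    gcongr
  have hm : ((2 ^ A j + peakIndex (A j) : ℕ) : ℝ) ≤ 4 * 4 ^ b := by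
    have := peakIndex_lt (A j)
    have h : 2 ^ A j + peakIndex (A j) ≤ 4 * 4 ^ b := by
      rw [hAj, show 4 ^ b = 2 ^ (2 * b) by rw [pow_mul]; norm_num, pow_succ] at *
      omega
    exact_mod_cast h
  calc ((j : ℝ) + 1) * (2 ^ A j + peakIndex (A j) : ℕ)
      ≤ ((j : ℝ) + 1) * (4 * 4 ^ b) := by gcongr
    _ = Real.exp (Real.log (4 * (j + 1)) + Real.log 4 * b) := by
      rw [Real.exp_add, mul_comm (Real.log 4), Real.exp_nat_mul, Real.exp_log (by positivity),
        Real.exp_log (by norm_num)]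
      ring
    _ ≤ Real.exp (φ (((2 ^ (j + 1))⁻¹ * b) ^ 2)) := Real.exp_le_exp.2 hφ
    _ ≤ _ := by
      rw [hval]
      exact Real.exp_le_exp.2 (hmono (Set.mem_Ici.2 (sq_nonneg _))
        (Set.mem_Ici.2 (by positivity)) hsq)

/-- Theorem 2 b). -/
theorem statement2 (φ : ℝ → ℝ) (hφ : PsiClass φ)
    (hlim : ∀ C : ℝ, ∃ᶠ u in atTop, C < φ u / Real.sqrt u) :
    ∃ F : G × G → ℝ, Continuous F ∧
      ∀ C : ℝ, ∃ᶠ m : ℕ in atTop, C <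
        (1 / (m : ℝ)) * ∑ l ∈ Finset.Icc 1 m,
          (Real.exp (φ |kaczPartialSum2 l l F (0, 0) - F (0, 0)|) - 1) := by
  obtain ⟨hmono, hφ0, -⟩ := hφ
  obtain ⟨B, hB, hφB⟩ := extraction_forall_of_frequently fun j : ℕ =>
    frequently_add_mul_le_comp_sq hmono hlim (Real.log (4 * (j + 1))) (Real.log 4)
      (c := (2 ^ (j + 1))⁻¹) (by positivity)
  set A : ℕ → ℕ := fun j => 2 * B j + 1
  have hA : StrictMono A := fun i j h => by simp only [A]; have := hB h; omega
  refine ⟨blockSeries A, continuous_blockSeries A, fun C => ?_⟩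
  have hpeak : Tendsto (fun j => 2 ^ A j + peakIndex (A j)) atTop atTop :=
    tendsto_atTop_mono (fun j => (Nat.lt_two_pow_self).le.trans (Nat.le_add_right _ _))
      hA.tendsto_atTop
  have hone : ∀ l : ℕ, 1 ≤ Real.exp (φ |kaczPartialSum2 l l (blockSeries A) (0, 0) -
      blockSeries A (0, 0)|) := fun l =>
    Real.one_le_exp (hφ0 ▸ hmono (Set.mem_Ici.2 le_rfl) (Set.mem_Ici.2 (abs_nonneg _))
      (abs_nonneg _))
  refine hpeak.frequently ((tendsto_natCast_atTop_atTop.eventually_gt_atTop C).frequently.mono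
    fun j hj => hj.trans_le ?_)
  exact le_mean_sub_one_of_le hone (Nat.one_le_two_pow.trans (Nat.le_add_right _ _))
    (le_exp_phi_blockSeries_peak hmono hA rfl (hφB j))
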